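/- Let Φ : ℝ^N → ℝ satisfy (λ|A| − 1)₊ ≤ Φ(A) ≤ Λ|A| + 1 for all A ∈ ℝ^N, where 0 < λ ≤ Λ. Assume Φ is differentiable on ℝ^N with q := ∇Φ satisfying |q(A)| ≤ Λ for all A, and that the convexification Φ** is differentiable on ℝ^N. Let ν₁, ν₂ be Borel probability measures on ℝ^N concentrated on the contact set B := {A ∈ ℝ^N : Φ**(A) = Φ(A)} and with finite first moments. Then ∫ q(A)·A dν₁(A) + ∫ q(B)·B dν₂(B) − (∫ q(B) dν₂(B)) · (∫ A dν₁(A)) − (∫ q(A) dν₁(A)) · (∫ B dν₂(B)) ≥ 0. -/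

import Mathlib

/-!
On the contact set `{Φ** = Φ}` the nonnegative function `Φ - Φ**` attains its minimum `0`, so
`q = ∇Φ` coincides there with `∇Φ**`, the gradient of a convex function, which is monotone:
`⟪q A - q B, A - B⟫ ≥ 0` for contact points `A`, `B`. The quantity in question is the integral
of `⟪q A - q B, A - B⟫` against `ν₁ ⊗ ν₂`, hence nonnegative.
-/

open MeasureTheory

/-- The convex envelope (convexification) `Φ**` of `Φ`: the pointwise supremum
of all convex functions lying below `Φ`. -/
noncomputable def convexEnvelope {N : ℕ}
    (Φ : EuclideanSpace ℝ (Fin N) → ℝ) (A : EuclideanSpace ℝ (Fin N)) : ℝ :=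
  sSup {y : ℝ | ∃ g : EuclideanSpace ℝ (Fin N) → ℝ,
    ConvexOn ℝ Set.univ g ∧ (∀ z, g z ≤ Φ z) ∧ y = g A}

open InnerProductSpace Set

section Calculus

variable {E : Type*} [NormedAddCommGroup E]

theorem ConvexOn.apply_sub_le_sub_of_hasFDerivAt [NormedSpace ℝ E] {s : Set E} {f : E → ℝ}
    {f' : StrongDual ℝ E} {x y : E} (hf : ConvexOn ℝ s f) (hx : x ∈ s) (hy : y ∈ s)
    (hf' : HasFDerivAt f f' x) :
    f' (y - x) ≤ f y - f x := by
  let line : ℝ →ᵃ[ℝ] E := AffineMap.lineMap x y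
  have hline : HasDerivAt line (y - x) 0 := AffineMap.hasDerivAt_lineMap
  have hcomp : HasDerivAt (f ∘ line) (f' (y - x)) 0 := by
    refine HasFDerivAt.comp_hasDerivAt (0 : ℝ) ?_ hline
    simpa [line] using hf'
  have := (hf.comp_affineMap line).le_slope_of_hasDerivAt (x := 0) (y := 1)
    (by simpa [line] using hx) (by simpa [line] using hy) zero_lt_one hcomp
  simpa [slope_def_field, line] using this

variable [InnerProductSpace ℝ E] [CompleteSpace E]

theorem ConvexOn.inner_sub_sub_nonneg_of_hasGradientAt {s : Set E} {f : E → ℝ} {x y gx gy : E}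
    (hf : ConvexOn ℝ s f) (hx : x ∈ s) (hy : y ∈ s)
    (hgx : HasGradientAt f gx x) (hgy : HasGradientAt f gy y) :
    0 ≤ ⟪gx - gy, x - y⟫_ℝ := by
  have hxy := hf.apply_sub_le_sub_of_hasFDerivAt hx hy hgx
  have hyx := hf.apply_sub_le_sub_of_hasFDerivAt hy hx hgy
  simp only [toDual_apply_apply] at hxy hyx
  rw [← neg_sub x y, inner_neg_right] at hxy
  rw [inner_sub_left]
  linarith

theorem HasGradientAt.eq_of_le_of_eq {f g : E → ℝ} {a f' g' : E}
    (hle : ∀ᶠ z in nhds a, g z ≤ f z) (heq : g a = f a)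
    (hf : HasGradientAt f f' a) (hg : HasGradientAt g g' a) :
    f' = g' := by
  have hmin : IsLocalMin (fun z => f z - g z) a := by
    filter_upwards [hle] with z hz
    linarith
  have := hmin.hasFDerivAt_eq_zero (hf.hasFDerivAt.sub hg.hasFDerivAt)
  exact (toDual ℝ E).injective (sub_eq_zero.mp this)

theorem measurable_of_hasGradientAt [MeasurableSpace E] [BorelSpace E] {f : E → ℝ} {q : E → E}
    (hq : ∀ x, HasGradientAt f (q x) x) : Measurable q := by
  rw [← gradient_eq hq, ← Function.id_comp (gradient f), ← (toDual ℝ E).symm_comp_self,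
    Function.comp_assoc, toDual_comp_gradient]
  exact (toDual ℝ E).symm.continuous.measurable.comp (measurable_fderiv ℝ f)

end Calculus

section Integral

variable {α E : Type*} [MeasurableSpace α] [NormedAddCommGroup E] [InnerProductSpace ℝ E]
  {μ : Measure α}

theorem MeasureTheory.Integrable.inner_of_norm_le {f g : α → E} {C : ℝ}
    (hf : AEStronglyMeasurable f μ) (hfC : ∀ x, ‖f x‖ ≤ C) (hg : Integrable g μ) :
    Integrable (fun x => ⟪f x, g x⟫_ℝ) μ := by
  refine (hg.norm.const_mul C).mono' (hf.inner hg.aestronglyMeasurable) (.of_forall fun x => ?_)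
  calc ‖⟪f x, g x⟫_ℝ‖ ≤ ‖f x‖ * ‖g x‖ := norm_inner_le_norm _ _
    _ ≤ C * ‖g x‖ := by gcongr; exact hfC x

theorem integral_inner_const [CompleteSpace E] {f : α → E} (hf : Integrable f μ) (c : E) :
    ∫ x, ⟪f x, c⟫_ℝ ∂μ = ⟪∫ x, f x ∂μ, c⟫_ℝ := by
  simp_rw [real_inner_comm c]
  exact integral_inner hf c

end Integral

section TwoMeasures

variable {E : Type*} [NormedAddCommGroup E] [InnerProductSpace ℝ E] [CompleteSpace E]
  [MeasurableSpace E] {q : E → E} {ν ν₁ ν₂ : Measure E}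

theorem integral_inner_sub_sub [IsProbabilityMeasure ν] (hq : Integrable q ν)
    (hid : Integrable (fun b => b) ν) (hqid : Integrable (fun b => ⟪q b, b⟫_ℝ) ν) (a : E) :
    ∫ b, ⟪q a - q b, a - b⟫_ℝ ∂ν
      = ⟪q a, a - ∫ b, b ∂ν⟫_ℝ - ⟪∫ b, q b ∂ν, a⟫_ℝ + ∫ b, ⟪q b, b⟫_ℝ ∂ν := by
  have hexpand : ∀ b, ⟪q a - q b, a - b⟫_ℝ = ⟪q a, a - b⟫_ℝ - ⟪q b, a⟫_ℝ + ⟪q b, b⟫_ℝ :=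
    fun b => by simp only [inner_sub_left, inner_sub_right]; ring
  have hsub : Integrable (fun b => a - b) ν := (integrable_const a).sub hid
  have h₁ : Integrable (fun b => ⟪q a, a - b⟫_ℝ) ν := hsub.const_inner (q a)
  have h₂ : Integrable (fun b => ⟪q b, a⟫_ℝ) ν := hq.inner_const a
  have h₁₂ : Integrable (fun b => ⟪q a, a - b⟫_ℝ - ⟪q b, a⟫_ℝ) ν := h₁.sub h₂
  simp_rw [hexpand]
  rw [integral_add h₁₂ hqid, integral_sub h₁ h₂, integral_inner hsub,
    integral_sub (integrable_const a) hid, integral_const, integral_inner_const hq]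
  simp

theorem integral_inner_cross_nonneg {S : Set E}
    (hmono : ∀ a ∈ S, ∀ b ∈ S, 0 ≤ ⟪q a - q b, a - b⟫_ℝ)
    [IsProbabilityMeasure ν₁] [IsProbabilityMeasure ν₂]
    (hS₁ : ∀ᵐ a ∂ν₁, a ∈ S) (hS₂ : ∀ᵐ b ∂ν₂, b ∈ S)
    (hq₁ : Integrable q ν₁) (hq₂ : Integrable q ν₂)
    (hid₁ : Integrable (fun a => a) ν₁) (hid₂ : Integrable (fun b => b) ν₂)
    (hqid₁ : Integrable (fun a => ⟪q a, a⟫_ℝ) ν₁) (hqid₂ : Integrable (fun b => ⟪q b, b⟫_ℝ) ν₂) :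
    0 ≤ (∫ a, ⟪q a, a⟫_ℝ ∂ν₁) + (∫ b, ⟪q b, b⟫_ℝ ∂ν₂)
        - ⟪∫ b, q b ∂ν₂, ∫ a, a ∂ν₁⟫_ℝ - ⟪∫ a, q a ∂ν₁, ∫ b, b ∂ν₂⟫_ℝ := by
  set m₂ := ∫ b, b ∂ν₂
  set k₂ := ∫ b, q b ∂ν₂
  set c₂ := ∫ b, ⟪q b, b⟫_ℝ ∂ν₂
  let G : E → ℝ := fun a => ⟪q a, a⟫_ℝ - ⟪q a, m₂⟫_ℝ - ⟪k₂, a⟫_ℝ + c₂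
  have hG : ∀ a, G a = ∫ b, ⟪q a - q b, a - b⟫_ℝ ∂ν₂ := fun a => by
    rw [integral_inner_sub_sub hq₂ hid₂ hqid₂, inner_sub_right]
  have hG_nonneg : 0 ≤ ∫ a, G a ∂ν₁ := by
    refine integral_nonneg_of_ae ?_
    filter_upwards [hS₁] with a ha
    rw [hG]
    refine integral_nonneg_of_ae ?_
    filter_upwards [hS₂] with b hb using hmono a ha b hb
  have h₂ : Integrable (fun a => ⟪q a, m₂⟫_ℝ) ν₁ := hq₁.inner_const m₂
  have h₃ : Integrable (fun a => ⟪k₂, a⟫_ℝ) ν₁ := hid₁.const_inner k₂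
  have h₁₂ : Integrable (fun a => ⟪q a, a⟫_ℝ - ⟪q a, m₂⟫_ℝ) ν₁ := hqid₁.sub h₂
  have h₁₂₃ : Integrable (fun a => ⟪q a, a⟫_ℝ - ⟪q a, m₂⟫_ℝ - ⟪k₂, a⟫_ℝ) ν₁ := h₁₂.sub h₃
  simp only [G] at hG_nonneg
  rw [integral_add h₁₂₃ (integrable_const c₂), integral_sub h₁₂ h₃,
    integral_sub hqid₁ h₂, integral_const, integral_inner_const hq₁, integral_inner hid₁]
    at hG_nonneg
  simp only [probReal_univ, one_smul] at hG_nonneg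
  linarith

end TwoMeasures

section ConvexEnvelope

variable {N : ℕ} {Φ g : EuclideanSpace ℝ (Fin N) → ℝ}

theorem le_convexEnvelope (hg : ConvexOn ℝ univ g) (hgΦ : ∀ z, g z ≤ Φ z)
    (A : EuclideanSpace ℝ (Fin N)) : g A ≤ convexEnvelope Φ A :=
  le_csSup ⟨Φ A, fun _ ⟨_, _, hg'Φ, hy⟩ => hy ▸ hg'Φ A⟩ ⟨g, hg, hgΦ, rfl⟩

theorem convexEnvelope_le_of_le (hg : ConvexOn ℝ univ g) (hgΦ : ∀ z, g z ≤ Φ z)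
    (A : EuclideanSpace ℝ (Fin N)) : convexEnvelope Φ A ≤ Φ A :=
  csSup_le ⟨g A, g, hg, hgΦ, rfl⟩ fun _ ⟨_, _, hg'Φ, hy⟩ => hy ▸ hg'Φ A

theorem convexOn_convexEnvelope (hg : ConvexOn ℝ univ g) (hgΦ : ∀ z, g z ≤ Φ z) :
    ConvexOn ℝ univ (convexEnvelope Φ) := by
  refine ⟨convex_univ, fun x _ y _ a b ha hb hab => ?_⟩
  refine csSup_le ⟨g (a • x + b • y), g, hg, hgΦ, rfl⟩ ?_
  rintro _ ⟨h, hh, hhΦ, rfl⟩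
  calc h (a • x + b • y) ≤ a • h x + b • h y := hh.2 (mem_univ x) (mem_univ y) ha hb hab
    _ ≤ a • convexEnvelope Φ x + b • convexEnvelope Φ y := by
      gcongr <;> exact le_convexEnvelope hh hhΦ _

theorem inner_sub_sub_nonneg_of_convexEnvelope_eq (hg : ConvexOn ℝ univ g)
    (hgΦ : ∀ z, g z ≤ Φ z) {A B qA qB pA pB : EuclideanSpace ℝ (Fin N)}
    (hA : convexEnvelope Φ A = Φ A) (hB : convexEnvelope Φ B = Φ B)
    (hqA : HasGradientAt Φ qA A) (hqB : HasGradientAt Φ qB B)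
    (hpA : HasGradientAt (convexEnvelope Φ) pA A) (hpB : HasGradientAt (convexEnvelope Φ) pB B) :
    0 ≤ ⟪qA - qB, A - B⟫_ℝ := by
  have hle := convexEnvelope_le_of_le hg hgΦ
  rw [hqA.eq_of_le_of_eq (.of_forall hle) hA hpA, hqB.eq_of_le_of_eq (.of_forall hle) hB hpB]
  exact (convexOn_convexEnvelope hg hgΦ).inner_sub_sub_nonneg_of_hasGradientAt
    (mem_univ A) (mem_univ B) hpA hpB

end ConvexEnvelope

theorem two_measure_monotonicity_general {N : ℕ} (lam Lam : ℝ)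
    (Φ : EuclideanSpace ℝ (Fin N) → ℝ)
    (hlow : ∀ A, max (lam * ‖A‖ - 1) 0 ≤ Φ A)
    (q p : EuclideanSpace ℝ (Fin N) → EuclideanSpace ℝ (Fin N))
    (hq : ∀ x, HasGradientAt Φ (q x) x)
    (hqb : ∀ A, ‖q A‖ ≤ Lam)
    (hp : ∀ x, HasGradientAt (convexEnvelope Φ) (p x) x)
    (ν₁ ν₂ : Measure (EuclideanSpace ℝ (Fin N)))
    [IsProbabilityMeasure ν₁] [IsProbabilityMeasure ν₂]
    (hconc₁ : ν₁ {A : EuclideanSpace ℝ (Fin N) | convexEnvelope Φ A = Φ A}ᶜ = 0)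
    (hconc₂ : ν₂ {A : EuclideanSpace ℝ (Fin N) | convexEnvelope Φ A = Φ A}ᶜ = 0)
    (hmom₁ : Integrable (fun A : EuclideanSpace ℝ (Fin N) => ‖A‖) ν₁)
    (hmom₂ : Integrable (fun A : EuclideanSpace ℝ (Fin N) => ‖A‖) ν₂) :
    (0 : ℝ) ≤
      (∫ A, (inner ℝ (q A) A : ℝ) ∂ν₁) + (∫ B, (inner ℝ (q B) B : ℝ) ∂ν₂)
        - (inner ℝ (∫ B, q B ∂ν₂) (∫ A, A ∂ν₁) : ℝ)
        - (inner ℝ (∫ A, q A ∂ν₁) (∫ B, B ∂ν₂) : ℝ) := by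
  have hΦ_nonneg : ∀ z, (fun _ => (0 : ℝ)) z ≤ Φ z := fun z => (le_max_right _ _).trans (hlow z)
  have hmono := fun A hA B hB => inner_sub_sub_nonneg_of_convexEnvelope_eq
    (convexOn_const 0 convex_univ) hΦ_nonneg hA hB (hq A) (hq B) (hp A) (hp B)
  have hqm := measurable_of_hasGradientAt hq
  have hid₁ := (integrable_norm_iff measurable_id.aestronglyMeasurable).mp hmom₁
  have hid₂ := (integrable_norm_iff measurable_id.aestronglyMeasurable).mp hmom₂
  exact integral_inner_cross_nonneg hmono (ae_iff.mpr hconc₁) (ae_iff.mpr hconc₂)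
    (.of_bound hqm.aestronglyMeasurable Lam (.of_forall hqb))
    (.of_bound hqm.aestronglyMeasurable Lam (.of_forall hqb)) hid₁ hid₂
    (hid₁.inner_of_norm_le hqm.aestronglyMeasurable hqb)
    (hid₂.inner_of_norm_le hqm.aestronglyMeasurable hqb)

/-- **Two-measure monotonicity inequality** (the absolutely continuous part
`I₁ ≥ 0` in the uniqueness proof): for probability measures `ν₁, ν₂`
concentrated on the contact set `B = {Φ** = Φ}` with finite first moments,
`∫ q·A dν₁ + ∫ q·B dν₂ − (∫ q dν₂)·(∫ A dν₁) − (∫ q dν₁)·(∫ B dν₂) ≥ 0`. -/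
theorem two_measure_monotonicity {N : ℕ} (lam Lam : ℝ)
    (hlam : 0 < lam) (hlL : lam ≤ Lam)
    (Φ : EuclideanSpace ℝ (Fin N) → ℝ)
    (hlow : ∀ A, max (lam * ‖A‖ - 1) 0 ≤ Φ A)
    (hup : ∀ A, Φ A ≤ Lam * ‖A‖ + 1)
    (q p : EuclideanSpace ℝ (Fin N) → EuclideanSpace ℝ (Fin N))
    (hq : ∀ x, HasGradientAt Φ (q x) x)
    (hqb : ∀ A, ‖q A‖ ≤ Lam)
    (hp : ∀ x, HasGradientAt (convexEnvelope Φ) (p x) x)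
    (ν₁ ν₂ : Measure (EuclideanSpace ℝ (Fin N)))
    [IsProbabilityMeasure ν₁] [IsProbabilityMeasure ν₂]
    (hconc₁ : ν₁ {A : EuclideanSpace ℝ (Fin N) | convexEnvelope Φ A = Φ A}ᶜ = 0)
    (hconc₂ : ν₂ {A : EuclideanSpace ℝ (Fin N) | convexEnvelope Φ A = Φ A}ᶜ = 0)
    (hmom₁ : Integrable (fun A : EuclideanSpace ℝ (Fin N) => ‖A‖) ν₁)
    (hmom₂ : Integrable (fun A : EuclideanSpace ℝ (Fin N) => ‖A‖) ν₂) :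
    (0 : ℝ) ≤
      (∫ A, (inner ℝ (q A) A : ℝ) ∂ν₁) + (∫ B, (inner ℝ (q B) B : ℝ) ∂ν₂)
        - (inner ℝ (∫ B, q B ∂ν₂) (∫ A, A ∂ν₁) : ℝ)
        - (inner ℝ (∫ A, q A ∂ν₁) (∫ B, B ∂ν₂) : ℝ) :=
  two_measure_monotonicity_general lam Lam Φ hlow q p hq hqb hp ν₁ ν₂ hconc₁ hconc₂ hmom₁ hmom₂
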